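/- Let κ be a nonzero complex number, set h = 3/(4κ), and let U = {z ∈ ℂ : 0 < |z| < 1} \ (−1, 0]. Suppose φ : ℂ → ℂ is complex differentiable on U with derivative complex differentiable on U, and satisfies κ²·z·(1−z)·φ″(z) + κ·(κ+1)·(1−2z)·φ′(z) − (2κ + 3/(4·z·(1−z)))·φ(z) = 0 for all z ∈ U. Define f(z) = z^{2h}·(1−z)^{2h}·φ(z), where complex powers are taken with the principal branch. Then f is twice complex differentiable on U and satisfies the hypergeometric-type equation κ²·z·(1−z)·f″(z) + κ·(κ−2)·(1−2z)·f′(z) + (κ−3)·f(z) = 0 for all z ∈ U. -/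

import Mathlib

/-!
With `a = 2h = 3/(2κ)` the gauge factor `g(z) = z^a (1-z)^a` has logarithmic derivative
`r = a/z - a/(1-z)` on the slit disk, so for `f = g φ` one gets `f' = g (r φ + φ')` and
`f'' = g ((r' + r²) φ + 2 r φ' + φ'')`. Substituting, the left side of the hypergeometric
equation for `f` is `g` times the left side of the equation for `φ`: since `κ² a = 3κ/2`, the
coefficient `2κ² z(1-z) r + κ(κ-2)(1-2z)` of `φ'` is `κ(κ+1)(1-2z)`, and the terms in `φ`
collapse to `-(2κ + 3/(4z(1-z)))`.
-/

open Complex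

/-- The slit punctured unit disk `{z ∈ ℂ : 0 < |z| < 1} \ (−1, 0]`. -/
def slitDisk : Set ℂ :=
  {z : ℂ | 0 < ‖z‖ ∧ ‖z‖ < 1} \
    {z : ℂ | z.im = 0 ∧ z.re ∈ Set.Ioc (-1 : ℝ) 0}

theorem slitDisk_eq_ball_inter_slitPlane : slitDisk = Metric.ball 0 1 ∩ slitPlane := by
  ext z
  simp only [slitDisk, Set.mem_sdiff, Set.mem_ofPred_eq, Set.mem_Ioc, Set.mem_inter_iff,
    mem_ball_zero_iff, mem_slitPlane_iff, norm_pos_iff]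
  have hre := abs_le.mp (abs_re_le_norm z)
  constructor
  · rintro ⟨⟨-, hlt⟩, hnot⟩
    refine ⟨hlt, ?_⟩
    by_contra! h
    exact hnot ⟨h.2, by linarith, h.1⟩
  · rintro ⟨hlt, h⟩
    refine ⟨⟨?_, hlt⟩, ?_⟩
    · rintro rfl
      simp at h
    · rintro ⟨him, -, hre⟩
      rcases h with h | h
      · linarith
      · exact h him

theorem isOpen_slitDisk : IsOpen slitDisk :=
  slitDisk_eq_ball_inter_slitPlane ▸ Metric.isOpen_ball.inter isOpen_slitPlane

theorem mem_slitPlane_of_mem_slitDisk {z : ℂ} (hz : z ∈ slitDisk) :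
    z ∈ slitPlane ∧ 1 - z ∈ slitPlane := by
  rw [slitDisk_eq_ball_inter_slitPlane] at hz
  refine ⟨hz.2, ?_⟩
  simpa [sub_eq_add_neg] using mem_slitPlane_of_norm_lt_one (z := -z) (by simpa using hz.1)

theorem hasDerivAt_div_sub_div_one_sub (a : ℂ) {z : ℂ} (hz : z ≠ 0) (hz' : 1 - z ≠ 0) :
    HasDerivAt (fun w => a / w - a / (1 - w)) (-a / z ^ 2 - a / (1 - z) ^ 2) z := by
  have h1 := (hasDerivAt_const z a).div (hasDerivAt_id' z) hz
  have h2 := (hasDerivAt_const z a).div ((hasDerivAt_id' z).const_sub 1) hz'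
  exact (h1.sub h2).congr_deriv (by ring)

theorem hasDerivAt_cpow_mul_one_sub_cpow (a : ℂ) {z : ℂ} (hz : z ∈ slitPlane)
    (hz' : 1 - z ∈ slitPlane) :
    HasDerivAt (fun w => w ^ a * (1 - w) ^ a)
      ((a / z - a / (1 - z)) * (z ^ a * (1 - z) ^ a)) z := by
  have hA := (hasStrictDerivAt_cpow_const (c := a) hz).hasDerivAt
  have hB := ((hasDerivAt_id' z).const_sub 1).cpow_const (c := a) hz'
  refine (hA.mul hB).congr_deriv ?_
  rw [cpow_sub _ _ (slitPlane_ne_zero hz), cpow_sub _ _ (slitPlane_ne_zero hz'), cpow_one,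
    cpow_one]
  field_simp
  ring

section LogDeriv

variable {𝕜 : Type*} [NontriviallyNormedField 𝕜] {g r φ : 𝕜 → 𝕜} {z r' : 𝕜}

theorem hasDerivAt_mul_of_logDeriv (hg : HasDerivAt g (r z * g z) z)
    (hφ : DifferentiableAt 𝕜 φ z) :
    HasDerivAt (fun w => g w * φ w) (g z * (r z * φ z + deriv φ z)) z :=
  (hg.mul hφ.hasDerivAt).congr_deriv (by ring)

theorem hasDerivAt_deriv_mul_of_logDeriv {U : Set 𝕜} (hU : IsOpen U) (hz : z ∈ U)
    (hg : ∀ w ∈ U, HasDerivAt g (r w * g w) w) (hr : HasDerivAt r r' z)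
    (hφ : ∀ w ∈ U, DifferentiableAt 𝕜 φ w) (hφ' : DifferentiableAt 𝕜 (deriv φ) z) :
    HasDerivAt (deriv fun w => g w * φ w)
      (g z * ((r' + r z ^ 2) * φ z + 2 * r z * deriv φ z + deriv (deriv φ) z)) z := by
  have hderiv : deriv (fun w => g w * φ w) =ᶠ[nhds z] fun w => g w * (r w * φ w + deriv φ w) :=
    Filter.eventually_of_mem (hU.mem_nhds hz) fun w hw =>
      (hasDerivAt_mul_of_logDeriv (hg w hw) (hφ w hw)).deriv
  have h := (hg z hz).mul ((hr.mul (hφ z hz).hasDerivAt).add hφ'.hasDerivAt)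
  refine (h.congr_deriv ?_).congr_of_eventuallyEq hderiv
  simp only [Pi.add_apply, Pi.mul_apply]
  ring

end LogDeriv

theorem hypergeometric_transform_identity {κ z : ℂ} (hκ : κ ≠ 0) (hz : z ≠ 0)
    (hz' : 1 - z ≠ 0) {a r r' : ℂ} (ha : a = 2 * (3 / (4 * κ))) (hr : r = a / z - a / (1 - z))
    (hr' : r' = -a / z ^ 2 - a / (1 - z) ^ 2) (p₀ p₁ p₂ : ℂ) :
    κ ^ 2 * z * (1 - z) * ((r' + r ^ 2) * p₀ + 2 * r * p₁ + p₂)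
        + κ * (κ - 2) * (1 - 2 * z) * (r * p₀ + p₁) + (κ - 3) * p₀
      = κ ^ 2 * z * (1 - z) * p₂ + κ * (κ + 1) * (1 - 2 * z) * p₁
        - (2 * κ + 3 / (4 * z * (1 - z))) * p₀ := by
  subst ha hr hr'
  field_simp
  ring

/-- **Section 3.1, equation (3.10) → (3.12).** If `φ` satisfies the second-order ODE
`κ²z(1−z)φ″ + κ(κ+1)(1−2z)φ′ − (2κ + 3/(4z(1−z)))φ = 0` on the slit disk, then
`f(z) = z^{2h}(1−z)^{2h}φ(z)` with `h = 3/(4κ)` (principal branch powers) is twice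
holomorphic on the slit disk and satisfies the hypergeometric-type equation
`κ²z(1−z)f″ + κ(κ−2)(1−2z)f′ + (κ−3)f = 0`. -/
theorem hypergeometric_substitution_two (κ : ℂ) (hκ : κ ≠ 0) (φ : ℂ → ℂ)
    (hd : ∀ z ∈ slitDisk, DifferentiableAt ℂ φ z)
    (hd' : ∀ z ∈ slitDisk, DifferentiableAt ℂ (deriv φ) z)
    (ode : ∀ z ∈ slitDisk, κ ^ 2 * z * (1 - z) * deriv (deriv φ) z
        + κ * (κ + 1) * (1 - 2 * z) * deriv φ z
        - (2 * κ + 3 / (4 * z * (1 - z))) * φ z = 0)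
    (f : ℂ → ℂ)
    (hf : f = fun z => z ^ (2 * (3 / (4 * κ))) * (1 - z) ^ (2 * (3 / (4 * κ))) * φ z) :
    (∀ z ∈ slitDisk, DifferentiableAt ℂ f z) ∧
    (∀ z ∈ slitDisk, DifferentiableAt ℂ (deriv f) z) ∧
    (∀ z ∈ slitDisk, κ ^ 2 * z * (1 - z) * deriv (deriv f) z
        + κ * (κ - 2) * (1 - 2 * z) * deriv f z
        + (κ - 3) * f z = 0) := by
  set a : ℂ := 2 * (3 / (4 * κ)) with ha
  set g : ℂ → ℂ := fun w => w ^ a * (1 - w) ^ a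
  set r : ℂ → ℂ := fun w => a / w - a / (1 - w)
  have hmem z (hz : z ∈ slitDisk) := mem_slitPlane_of_mem_slitDisk hz
  have hne z (hz : z ∈ slitDisk) : z ≠ 0 ∧ 1 - z ≠ 0 :=
    ⟨slitPlane_ne_zero (hmem z hz).1, slitPlane_ne_zero (hmem z hz).2⟩
  have hg : ∀ z ∈ slitDisk, HasDerivAt g (r z * g z) z := fun z hz =>
    hasDerivAt_cpow_mul_one_sub_cpow a (hmem z hz).1 (hmem z hz).2
  have hf₁ z hz := hasDerivAt_mul_of_logDeriv (hg z hz) (hd z hz)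
  have hf₂ z (hz : z ∈ slitDisk) := hasDerivAt_deriv_mul_of_logDeriv isOpen_slitDisk hz hg
    (hasDerivAt_div_sub_div_one_sub a (hne z hz).1 (hne z hz).2) hd (hd' z hz)
  subst hf
  refine ⟨fun z hz => (hf₁ z hz).differentiableAt, fun z hz => (hf₂ z hz).differentiableAt,
    fun z hz => ?_⟩
  rw [(hf₂ z hz).deriv, (hf₁ z hz).deriv]
  linear_combination g z * (ode z hz + hypergeometric_transform_identity hκ (hne z hz).1
    (hne z hz).2 ha rfl rfl (φ z) (deriv φ z) (deriv (deriv φ) z))
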